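/- For nonnegative integers a < b and m ≥ 0, the double integral I_m(a,b) = ((-1)^m/m!) ∫_{(0,1)^2} (log^m(xy)) x^a y^b / (1-xy) dx dy equals (H_{m+1}(b) - H_{m+1}(a))/(b-a), where H_s(x) = Σ_{k=1}^x 1/k^s. -/

import Mathlib

/-!
Expanding `1 / (1 - xy) = ∑ₙ (xy)ⁿ` and integrating termwise (the terms are nonnegative) turns the
integral into `∑ₙ ∫∫ (-log xy)ᵐ x^(a+n) y^(b+n)`. Splitting `(-log xy)ᵐ = (-log x - log y)ᵐ`
binomially and substituting `x = e⁻ᵗ` in each factor gives the Gamma integrals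
`∫₀¹ xᵖ (-log x)ʲ dx = j! / (p+1)^(j+1)`, and the geometric sum over `j` collapses to
`∫∫ (-log xy)ᵐ xᵖ y^q = m! ((p+1)^-(m+1) - (q+1)^-(m+1)) / (q - p)`.
With `p = a + n`, `q = b + n` the series over `n` telescopes to `m! (H_{m+1}(b) - H_{m+1}(a)) / (b - a)`.
-/

open MeasureTheory Real Set Filter Topology

lemma Antitone.hasSum_sub_succ {f : ℕ → ℝ} {l : ℝ} (hf : Antitone f)
    (hl : Tendsto f atTop (𝓝 l)) : HasSum (fun n => f n - f (n + 1)) (f 0 - l) := by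
  rw [hasSum_iff_tendsto_nat_of_nonneg fun n => sub_nonneg.mpr (hf n.le_succ)]
  simpa only [Finset.sum_range_sub'] using tendsto_const_nhds.sub hl

lemma Antitone.hasSum_sub_add {f : ℕ → ℝ} (hf : Antitone f) (h0 : Tendsto f atTop (𝓝 0))
    {a b : ℕ} (hab : a ≤ b) :
    HasSum (fun n => f (a + n) - f (b + n)) (∑ j ∈ Finset.Ico a b, f j) := by
  have hshift (j : ℕ) : HasSum (fun n => f (n + j) - f (n + 1 + j)) (f j) := by
    simpa using (show Antitone fun n => f (n + j) from fun _ _ h => hf (by omega)).hasSum_sub_succ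
      (h0.comp (tendsto_add_atTop_nat j))
  convert hasSum_sum fun j (_ : j ∈ Finset.Ico a b) => hshift j using 1
  ext n
  rw [← neg_sub, ← Finset.sum_Ico_sub (fun j => f (j + n)) hab, ← Finset.sum_neg_distrib]
  exact Finset.sum_congr rfl fun j _ => by rw [neg_sub]; ring_nf

lemma MeasureTheory.hasSum_integral_of_nonneg {α ι : Type*} [MeasurableSpace α] [Countable ι]
    {μ : Measure α} {F : ι → α → ℝ} {G : α → ℝ} (hF : ∀ i, Integrable (F i) μ)
    (hF0 : ∀ i, 0 ≤ᵐ[μ] F i) (hG : ∀ᵐ x ∂μ, HasSum (fun i => F i x) (G x))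
    (hS : Summable fun i => ∫ x, F i x ∂μ) :
    HasSum (fun i => ∫ x, F i x ∂μ) (∫ x, G x ∂μ) := by
  have hnorm (i : ι) : ∫ x, ‖F i x‖ ∂μ = ∫ x, F i x ∂μ :=
    integral_congr_ae <| (hF0 i).mono fun x hx => norm_of_nonneg hx
  rw [integral_congr_ae <| hG.mono fun x hx => hx.tsum_eq.symm]
  exact hasSum_integral_of_summable_integral_norm hF (hS.congr fun i => (hnorm i).symm)

lemma MeasureTheory.IntegrableOn.mul_prod {α β L : Type*} [MeasurableSpace α] [MeasurableSpace β]
    [NormedRing L] {μ : Measure α} {ν : Measure β} [SFinite μ] [SFinite ν]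
    {f : α → L} {g : β → L} {s : Set α} {t : Set β}
    (hf : IntegrableOn f s μ) (hg : IntegrableOn g t ν) :
    IntegrableOn (fun z : α × β => f z.1 * g z.2) (s ×ˢ t) (μ.prod ν) := by
  rw [IntegrableOn, ← Measure.prod_restrict]
  exact Integrable.mul_prod hf hg

lemma Finset.sum_Ico_comp_add_one {G : Type*} [AddCommGroup G] (g : ℕ → G) {a b : ℕ}
    (hab : a ≤ b) :
    ∑ j ∈ Finset.Ico a b, g (j + 1) = ∑ k ∈ Finset.Icc 1 b, g k - ∑ k ∈ Finset.Icc 1 a, g k := by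
  have hIcc (n : ℕ) : ∑ k ∈ Finset.Icc 1 n, g k = ∑ j ∈ Finset.range n, g (j + 1) := by
    rw [Finset.range_eq_Ico, Finset.sum_Ico_add', ← Finset.Ico_add_one_right_eq_Icc]
  rw [hIcc, hIcc, Finset.sum_Ico_eq_sub _ hab]

lemma sum_choose_mul_factorial_div_pow {P Q : ℝ} (hP : P ≠ 0) (hQ : Q ≠ 0) (hPQ : P ≠ Q)
    (m : ℕ) :
    ∑ j ∈ Finset.range (m + 1),
        m.choose j * (j.factorial / P ^ (j + 1) * ((m - j).factorial / Q ^ (m - j + 1)))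
      = m.factorial * (1 / P ^ (m + 1) - 1 / Q ^ (m + 1)) / (Q - P) := by
  set u := P⁻¹
  set v := Q⁻¹
  have hterm : ∀ j ∈ Finset.range (m + 1),
      m.choose j * (j.factorial / P ^ (j + 1) * ((m - j).factorial / Q ^ (m - j + 1)))
        = m.factorial * (u * v) * (u ^ j * v ^ (m - j)) := by
    intro j hj
    rw [← Nat.choose_mul_factorial_mul_factorial (Nat.lt_succ_iff.mp (Finset.mem_range.mp hj))]
    simp only [u, v, inv_pow, pow_succ]
    push_cast
    field_simp
  have hgeom : (∑ j ∈ Finset.range (m + 1), u ^ j * v ^ (m - j)) * (u - v)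
      = u ^ (m + 1) - v ^ (m + 1) := by
    simpa using geom_sum₂_mul u v (m + 1)
  have huv : u * v * (Q - P) = u - v := by
    simp only [u, v]; field_simp
  rw [Finset.sum_congr rfl hterm, ← Finset.mul_sum, eq_div_iff (sub_ne_zero.mpr hPQ.symm),
    one_div, one_div, ← inv_pow, ← inv_pow]
  linear_combination
    (m.factorial * ∑ j ∈ Finset.range (m + 1), u ^ j * v ^ (m - j)) * huv + m.factorial * hgeom

lemma hasSum_mul_pow_add_mul_pow_add {x y : ℝ} (hxy : |x * y| < 1) (c : ℝ) (a b : ℕ) :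
    HasSum (fun n => c * x ^ (a + n) * y ^ (b + n)) (c * x ^ a * y ^ b / (1 - x * y)) := by
  have hterm : (fun n => c * x ^ (a + n) * y ^ (b + n))
      = fun n => c * x ^ a * y ^ b * (x * y) ^ n := by
    ext n
    rw [pow_add, pow_add, mul_pow]
    ring
  rw [hterm, div_eq_mul_inv]
  exact (hasSum_geometric_of_abs_lt_one hxy).mul_left _

lemma image_exp_neg_Ioi : (fun t : ℝ => exp (-t)) '' Ioi 0 = Ioo 0 1 := by
  ext x
  constructor
  · rintro ⟨t, ht, rfl⟩
    exact ⟨exp_pos _, exp_lt_one_iff.mpr (neg_lt_zero.mpr ht)⟩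
  · rintro ⟨hx0, hx1⟩
    exact ⟨-log x, neg_pos.mpr (log_neg hx0 hx1), by simp [exp_log hx0]⟩

lemma hasDerivWithinAt_exp_neg (s : Set ℝ) (t : ℝ) :
    HasDerivWithinAt (fun t => exp (-t)) (-exp (-t)) s t := by
  simpa using (hasDerivAt_neg t).exp.hasDerivWithinAt

lemma injective_exp_neg : Function.Injective fun t : ℝ => exp (-t) :=
  fun _ _ h => neg_injective (exp_injective h)

lemma abs_exp_neg_smul_rpow_mul_neg_log_pow (s : ℝ) (j : ℕ) (t : ℝ) :
    |-exp (-t)| • (exp (-t) ^ s * (-log (exp (-t))) ^ j)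
      = t ^ ((j + 1 : ℝ) - 1) * exp (-((s + 1) * t)) := by
  rw [abs_neg, abs_of_pos (exp_pos _), log_exp, neg_neg, smul_eq_mul, ← exp_mul,
    add_sub_cancel_right, rpow_natCast, mul_left_comm, ← mul_assoc, ← exp_add]
  ring_nf

lemma integrableOn_Ioo_rpow_mul_neg_log_pow {s : ℝ} (hs : -1 < s) (j : ℕ) :
    IntegrableOn (fun x => x ^ s * (-log x) ^ j) (Ioo 0 1) := by
  rw [← image_exp_neg_Ioi, integrableOn_image_iff_integrableOn_abs_deriv_smul measurableSet_Ioi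
    (fun t _ => hasDerivWithinAt_exp_neg _ t) injective_exp_neg.injOn]
  simp_rw [abs_exp_neg_smul_rpow_mul_neg_log_pow, add_sub_cancel_right]
  simpa only [rpow_one, neg_mul] using integrableOn_rpow_mul_exp_neg_mul_rpow (p := 1)
    (neg_one_lt_zero.trans_le j.cast_nonneg) one_pos (by linarith : 0 < s + 1)

lemma integral_Ioo_rpow_mul_neg_log_pow {s : ℝ} (hs : -1 < s) (j : ℕ) :
    ∫ x in Ioo 0 1, x ^ s * (-log x) ^ j = j.factorial / (s + 1) ^ (j + 1) := by
  rw [← image_exp_neg_Ioi, integral_image_eq_integral_abs_deriv_smul measurableSet_Ioi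
    (fun t _ => hasDerivWithinAt_exp_neg _ t) injective_exp_neg.injOn]
  simp_rw [abs_exp_neg_smul_rpow_mul_neg_log_pow]
  rw [integral_rpow_mul_exp_neg_mul_Ioi (by positivity) (by linarith : 0 < s + 1),
    Gamma_nat_eq_factorial, ← Nat.cast_add_one, rpow_natCast, div_pow, one_pow, one_div_mul_eq_div]

lemma neg_log_mul_pow_mul_rpow_mul_rpow {x y : ℝ} (hx : 0 < x) (hy : 0 < y) (m : ℕ) (p q : ℝ) :
    (-log (x * y)) ^ m * x ^ p * y ^ q
      = ∑ j ∈ Finset.range (m + 1),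
          m.choose j * ((x ^ p * (-log x) ^ j) * (y ^ q * (-log y) ^ (m - j))) := by
  rw [log_mul hx.ne' hy.ne', neg_add, add_pow, Finset.sum_mul, Finset.sum_mul]
  exact Finset.sum_congr rfl fun j _ => by ring

lemma neg_log_mul_pow_mul_pow_mul_pow_nonneg {x y : ℝ} (hx : 0 ≤ x) (hy : 0 ≤ y)
    (hxy : x * y ≤ 1) (m p q : ℕ) : 0 ≤ (-log (x * y)) ^ m * x ^ p * y ^ q := by
  have := neg_nonneg.mpr (log_nonpos (mul_nonneg hx hy) hxy)
  positivity

lemma integrableOn_unitSquare_neg_log_mul_pow_mul_rpow_mul_rpow (m : ℕ) {p q : ℝ}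
    (hp : -1 < p) (hq : -1 < q) :
    IntegrableOn (fun z : ℝ × ℝ => (-log (z.1 * z.2)) ^ m * z.1 ^ p * z.2 ^ q)
      (Ioo 0 1 ×ˢ Ioo 0 1) := by
  refine IntegrableOn.congr_fun ?_ (fun z hz =>
    (neg_log_mul_pow_mul_rpow_mul_rpow hz.1.1 hz.2.1 m p q).symm)
    (measurableSet_Ioo.prod measurableSet_Ioo)
  exact integrable_finsetSum _ fun j _ =>
    (((integrableOn_Ioo_rpow_mul_neg_log_pow hp j).mul_prod
      (integrableOn_Ioo_rpow_mul_neg_log_pow hq (m - j))).const_mul _)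

lemma integral_unitSquare_neg_log_mul_pow_mul_rpow_mul_rpow (m : ℕ) {p q : ℝ}
    (hp : -1 < p) (hq : -1 < q) (hpq : p ≠ q) :
    ∫ z in Ioo 0 1 ×ˢ Ioo 0 1, (-log (z.1 * z.2)) ^ m * z.1 ^ p * z.2 ^ q
      = m.factorial * (1 / (p + 1) ^ (m + 1) - 1 / (q + 1) ^ (m + 1)) / (q - p) := by
  rw [setIntegral_congr_fun (measurableSet_Ioo.prod measurableSet_Ioo) (fun z hz =>
      neg_log_mul_pow_mul_rpow_mul_rpow hz.1.1 hz.2.1 m p q),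
    Measure.volume_eq_prod, integral_finsetSum _ fun j _ =>
      ((integrableOn_Ioo_rpow_mul_neg_log_pow hp j).mul_prod
        (integrableOn_Ioo_rpow_mul_neg_log_pow hq (m - j))).const_mul _]
  rw [← add_sub_add_right_eq_sub q p 1, ← sum_choose_mul_factorial_div_pow (by linarith)
    (by linarith) (by simpa using hpq)]
  refine Finset.sum_congr rfl fun j _ => ?_
  rw [integral_const_mul, setIntegral_prod_mul (fun x => x ^ p * (-log x) ^ j)
    (fun y => y ^ q * (-log y) ^ (m - j)), integral_Ioo_rpow_mul_neg_log_pow hp,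
    integral_Ioo_rpow_mul_neg_log_pow hq]

lemma integrableOn_unitSquare_neg_log_mul_pow_mul_pow (m p q : ℕ) :
    IntegrableOn (fun z : ℝ × ℝ => (-log (z.1 * z.2)) ^ m * z.1 ^ p * z.2 ^ q)
      (Ioo 0 1 ×ˢ Ioo 0 1) := by
  simpa only [rpow_natCast] using integrableOn_unitSquare_neg_log_mul_pow_mul_rpow_mul_rpow m
    (neg_one_lt_zero.trans_le p.cast_nonneg) (neg_one_lt_zero.trans_le q.cast_nonneg)

noncomputable def genHarmonic (s N : ℕ) : ℝ := ∑ k ∈ Finset.Icc 1 N, 1 / (k : ℝ) ^ s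

lemma hasSum_integral_unitSquare_neg_log_mul_pow_add_mul_pow_add (m : ℕ) {a b : ℕ} (hab : a < b) :
    HasSum
      (fun n => ∫ z in Ioo 0 1 ×ˢ Ioo 0 1, (-log (z.1 * z.2)) ^ m * z.1 ^ (a + n) * z.2 ^ (b + n))
      (m.factorial * (genHarmonic (m + 1) b - genHarmonic (m + 1) a) / (b - a)) := by
  set f : ℕ → ℝ := fun k => 1 / ((k : ℝ) + 1) ^ (m + 1)
  have hf_anti : Antitone f := fun i j h => by simp only [f]; gcongr
  have hf_lim : Tendsto f atTop (𝓝 0) := by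
    simpa [f, one_div_pow] using (tendsto_one_div_add_atTop_nhds_zero_nat (𝕜 := ℝ)).pow (m + 1)
  have hval (n : ℕ) :
      ∫ z in Ioo 0 1 ×ˢ Ioo 0 1, (-log (z.1 * z.2)) ^ m * z.1 ^ (a + n) * z.2 ^ (b + n)
        = m.factorial * (f (a + n) - f (b + n)) / (b - a) := by
    have := integral_unitSquare_neg_log_mul_pow_mul_rpow_mul_rpow m
      (neg_one_lt_zero.trans_le (a + n).cast_nonneg)
      (neg_one_lt_zero.trans_le (b + n).cast_nonneg) (by norm_cast; omega)
    simp only [rpow_natCast] at this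
    rw [this]
    simp only [f]
    push_cast
    ring
  have hH : ∑ j ∈ Finset.Ico a b, f j = genHarmonic (m + 1) b - genHarmonic (m + 1) a := by
    simpa [f, genHarmonic] using
      Finset.sum_Ico_comp_add_one (fun k : ℕ => 1 / (k : ℝ) ^ (m + 1)) hab.le
  rw [← hH]
  simpa only [hval] using ((hf_anti.hasSum_sub_add hf_lim hab.le).mul_left _).div_const _

theorem stmt_7 (a b m : ℕ) (hab : a < b) :
    ((-1 : ℝ) ^ m / (m.factorial : ℝ)) *
        ∫ p in (Set.Ioo (0 : ℝ) 1) ×ˢ (Set.Ioo (0 : ℝ) 1),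
          (Real.log (p.1 * p.2)) ^ m * p.1 ^ a * p.2 ^ b / (1 - p.1 * p.2) =
      ((∑ k ∈ Finset.Icc 1 b, 1 / (k : ℝ) ^ (m + 1)) -
        ∑ k ∈ Finset.Icc 1 a, 1 / (k : ℝ) ^ (m + 1)) / ((b : ℝ) - a) := by
  have hsq : MeasurableSet (Ioo (0 : ℝ) 1 ×ˢ Ioo (0 : ℝ) 1) :=
    measurableSet_Ioo.prod measurableSet_Ioo
  have hlt : ∀ z ∈ Ioo (0 : ℝ) 1 ×ˢ Ioo (0 : ℝ) 1, z.1 * z.2 < 1 := fun z hz =>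
    mul_lt_one_of_nonneg_of_lt_one_left hz.1.1.le hz.1.2 hz.2.2.le
  have hseries := hasSum_integral_unitSquare_neg_log_mul_pow_add_mul_pow_add m hab
  have hG := hasSum_integral_of_nonneg
    (G := fun z => (-log (z.1 * z.2)) ^ m * z.1 ^ a * z.2 ^ b / (1 - z.1 * z.2))
    (fun n => integrableOn_unitSquare_neg_log_mul_pow_mul_pow m (a + n) (b + n))
    (fun n => ae_restrict_of_forall_mem hsq fun z hz =>
      neg_log_mul_pow_mul_pow_mul_pow_nonneg hz.1.1.le hz.2.1.le (hlt z hz).le m _ _)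
    (ae_restrict_of_forall_mem hsq fun z hz => hasSum_mul_pow_add_mul_pow_add
      ((abs_of_pos (mul_pos hz.1.1 hz.2.1)).trans_lt (hlt z hz)) _ a b)
    hseries.summable
  have hsign (z : ℝ × ℝ) : (-1) ^ m * (log (z.1 * z.2) ^ m * z.1 ^ a * z.2 ^ b / (1 - z.1 * z.2))
      = (-log (z.1 * z.2)) ^ m * z.1 ^ a * z.2 ^ b / (1 - z.1 * z.2) := by
    rw [neg_pow]; ring
  rw [div_mul_eq_mul_div, ← integral_const_mul]
  simp_rw [hsign]
  rw [hG.unique hseries, mul_div_assoc, mul_div_cancel_left₀ _ (by positivity)]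
  rfl
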